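/- Let S be a set of n points in convex position in general position and let E be an injective mapping of path vertices v_1,...,v_n onto S whose straight-line drawing is planar. Then for every i with 1 < i < n, both the image of {v_1,...,v_{i−1}} and the image of {v_{i+1},...,v_n} are consecutive subsets of S along the convex hull. -/

import Mathlib

/-- Edge direction labels. -/
inductive Dir | U | D | L | R
deriving DecidableEq

/-- Opposite label: U↔D, L↔R. -/
def Dir.opp : Dir → Dir
  | .U => .D | .D => .U | .L => .R | .R => .L

/-- Label after counterclockwise rotation by π/2: U↦L, D↦R, R↦U, L↦D. -/
def Dir.rot : Dir → Dir
  | .U => .L | .D => .R | .R => .U | .L => .D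

/-- Label after vertical-line reflection: U↦U, D↦D, R↦L, L↦R. -/
def Dir.mir : Dir → Dir
  | .U => .U | .D => .D | .R => .L | .L => .R

/-- An edge from `a` to `b` is consistent with a direction label. -/
def dirOk : Dir → ℝ × ℝ → ℝ × ℝ → Prop
  | .U, a, b => a.2 < b.2
  | .D, a, b => b.2 < a.2
  | .R, a, b => a.1 < b.1
  | .L, a, b => b.1 < a.1

/-- The drawing of a path with edge labels `d` and vertex placement `E` is
direction-consistent. -/
def DirConsistent {m : ℕ} (d : Fin m → Dir) (E : Fin (m + 1) → ℝ × ℝ) : Prop :=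
  ∀ i : Fin m, dirOk (d i) (E i.castSucc) (E i.succ)

/-- The straight-line drawing of the path with vertex placement `E` is planar:
non-adjacent segments are disjoint; adjacent segments meet only at the shared endpoint. -/
def PlanarDrawing {m : ℕ} (E : Fin (m + 1) → ℝ × ℝ) : Prop :=
  (∀ i j : Fin m, (i : ℕ) + 1 < (j : ℕ) →
    segment ℝ (E i.castSucc) (E i.succ) ∩ segment ℝ (E j.castSucc) (E j.succ) = ∅) ∧
  (∀ i j : Fin m, (i : ℕ) + 1 = (j : ℕ) →
    segment ℝ (E i.castSucc) (E i.succ) ∩ segment ℝ (E j.castSucc) (E j.succ) = {E i.succ})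

/-- `E` is an embedding of the path vertices onto the point set `S`. -/
def EmbOn {m : ℕ} (E : Fin (m + 1) → ℝ × ℝ) (S : Set (ℝ × ℝ)) : Prop :=
  Function.Injective E ∧ Set.range E = S

/-- Planar direction-consistent embedding of the labeled path `d` on `S`. -/
def PDCE {m : ℕ} (d : Fin m → Dir) (E : Fin (m + 1) → ℝ × ℝ) (S : Set (ℝ × ℝ)) : Prop :=
  EmbOn E S ∧ DirConsistent d E ∧ PlanarDrawing E

/-- `S` is in convex position. -/
def ConvexPos (S : Set (ℝ × ℝ)) : Prop :=
  ConvexIndependent ℝ ((↑) : S → ℝ × ℝ)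

/-- No three distinct points of `S` are collinear. -/
def NoThreeCollinear (S : Set (ℝ × ℝ)) : Prop :=
  ∀ p ∈ S, ∀ q ∈ S, ∀ r ∈ S, p ≠ q → p ≠ r → q ≠ r →
    ¬ Collinear ℝ ({p, q, r} : Set (ℝ × ℝ))

/-- General position: no three collinear, no two points with equal x- or y-coordinate. -/
def GenPos (S : Set (ℝ × ℝ)) : Prop :=
  NoThreeCollinear S ∧ ∀ p ∈ S, ∀ q ∈ S, p ≠ q → p.1 ≠ q.1 ∧ p.2 ≠ q.2

def IsTopmost (S : Set (ℝ × ℝ)) (t : ℝ × ℝ) : Prop :=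
  t ∈ S ∧ ∀ p ∈ S, p ≠ t → p.2 < t.2
def IsBottommost (S : Set (ℝ × ℝ)) (b : ℝ × ℝ) : Prop :=
  b ∈ S ∧ ∀ p ∈ S, p ≠ b → b.2 < p.2
def IsLeftmost (S : Set (ℝ × ℝ)) (l : ℝ × ℝ) : Prop :=
  l ∈ S ∧ ∀ p ∈ S, p ≠ l → l.1 < p.1
def IsRightmost (S : Set (ℝ × ℝ)) (r : ℝ × ℝ) : Prop :=
  r ∈ S ∧ ∀ p ∈ S, p ≠ r → p.1 < r.1

/-- Cross product telling on which side of the directed line `a → b` the point `p` lies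
(`0 < cross a b p` means `p` is strictly to the left). -/
def cross (a b p : ℝ × ℝ) : ℝ :=
  (b.1 - a.1) * (p.2 - a.2) - (b.2 - a.2) * (p.1 - a.1)

/-- With `b` bottommost and `t` topmost, all other points lie strictly to the left of the
line through `b` and `t`. -/
def LeftSided (S : Set (ℝ × ℝ)) (b t : ℝ × ℝ) : Prop :=
  IsBottommost S b ∧ IsTopmost S t ∧ ∀ p ∈ S, p ≠ b → p ≠ t → 0 < cross b t p

/-- With `b` bottommost and `t` topmost, all other points lie strictly to the right of the
line through `b` and `t`. -/
def RightSided (S : Set (ℝ × ℝ)) (b t : ℝ × ℝ) : Prop :=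
  IsBottommost S b ∧ IsTopmost S t ∧ ∀ p ∈ S, p ≠ b → p ≠ t → cross b t p < 0

/-- Two points of `S` are consecutive on the convex hull of `S`: all other points of `S`
lie strictly on one side of the line through them. -/
def HullConsecutive (S : Set (ℝ × ℝ)) (p q : ℝ × ℝ) : Prop :=
  p ∈ S ∧ q ∈ S ∧ p ≠ q ∧
    ((∀ r ∈ S, r ≠ p → r ≠ q → 0 < cross p q r) ∨
     (∀ r ∈ S, r ≠ p → r ≠ q → cross p q r < 0))

/-- Strip-convex point set with bottommost `b`, leftmost `l`, topmost `t`, rightmost `r`: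
`b` and `l` coincide or are hull-consecutive, and so do `t` and `r`. -/
def StripConvex (S : Set (ℝ × ℝ)) (b l t r : ℝ × ℝ) : Prop :=
  IsBottommost S b ∧ IsLeftmost S l ∧ IsTopmost S t ∧ IsRightmost S r ∧
    (b = l ∨ HullConsecutive S b l) ∧ (t = r ∨ HullConsecutive S t r)

/-- `T` is a consecutive subset of the convex point set `S` along its hull:
it can be separated from `S \ T` by a line. -/
def Consecutive (S T : Set (ℝ × ℝ)) : Prop :=
  T ⊆ S ∧ ∃ f : (ℝ × ℝ) →ₗ[ℝ] ℝ, ∃ c : ℝ,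
    (∀ p ∈ T, c < f p) ∧ ∀ p ∈ S \ T, f p < c

/-!
Cut the path after its `k`-th vertex. If the convex hulls of the two parts met, convex position
would produce a chord `[a, c]` of the first part crossing a chord of the second part. The second
part then changes sides of the line `ac` along one of its edges `[x, y]`, which (again by convex
position) crosses `[a, c]`; so `a` and `c` lie on opposite sides of the line `xy`, and the first
part, running between `a` and `c`, has an edge crossing `[x, y]`: two non-adjacent edges of the
planar path cross. Hence the hulls are disjoint, and a separating line exists by Hahn–Banach.
-/

open Set

lemma zero_mem_segment_iff_mul_nonpos {x y : ℝ} : (0 : ℝ) ∈ segment ℝ x y ↔ x * y ≤ 0 := by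
  rw [segment_eq_uIcc, mem_uIcc]
  constructor
  · rintro (⟨hx, hy⟩ | ⟨hy, hx⟩) <;> nlinarith
  · intro h
    rcases lt_trichotomy x 0 with hx | rfl | hx
    · exact Or.inl ⟨hx.le, nonneg_of_mul_nonpos_right h hx⟩
    · exact (le_total 0 y).imp (⟨le_rfl, ·⟩) (⟨·, le_rfl⟩)
    · exact Or.inr ⟨nonpos_of_mul_nonpos_right h hx, hx.le⟩

lemma exists_adjacent_mul_nonpos_of_le {m : ℕ} (g : Fin (m + 1) → ℝ) {j₀ : Fin (m + 1)} :
    ∀ j₁, j₀ ≤ j₁ → g j₀ * g j₁ < 0 →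
      ∃ e : Fin m, j₀ ≤ e.castSucc ∧ e.succ ≤ j₁ ∧ g e.castSucc * g e.succ ≤ 0 := by
  intro j₁
  induction j₁ using Fin.induction with
  | zero =>
    intro h₀ hneg
    rw [Fin.le_zero_iff.mp h₀] at hneg
    exact absurd hneg (mul_self_nonneg _).not_gt
  | succ i ih =>
    intro hle hneg
    have hj₀ : j₀ ≤ i.castSucc := by
      rcases hle.lt_or_eq with hlt | rfl
      · exact Fin.le_castSucc_iff.mpr hlt
      · exact absurd hneg (mul_self_nonneg _).not_gt
    by_cases hi : g i.castSucc * g i.succ ≤ 0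
    · exact ⟨i, hj₀, le_rfl, hi⟩
    · have hsign : g j₀ * g i.castSucc < 0 := by
        by_contra hc
        nlinarith [mul_nonneg (not_lt.mp hc) (sq_nonneg (g i.succ)),
          mul_neg_of_neg_of_pos hneg (not_le.mp hi)]
      obtain ⟨e, he₀, he₁, he⟩ := ih hj₀ hsign
      exact ⟨e, he₀, he₁.trans Fin.castSucc_lt_succ.le, he⟩

lemma exists_adjacent_mul_nonpos {m : ℕ} (g : Fin (m + 1) → ℝ) {L U : ℕ} {j₀ j₁ : Fin (m + 1)}
    (h₀ : L ≤ j₀ ∧ (j₀ : ℕ) < U) (h₁ : L ≤ j₁ ∧ (j₁ : ℕ) < U) (h : g j₀ * g j₁ < 0) :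
    ∃ e : Fin m, L ≤ (e : ℕ) ∧ (e : ℕ) + 1 < U ∧ g e.castSucc * g e.succ ≤ 0 := by
  wlog h01 : j₀ ≤ j₁ generalizing j₀ j₁
  · exact this h₁ h₀ (by rwa [mul_comm]) (le_of_not_ge h01)
  obtain ⟨e, he₀, he₁, he⟩ := exists_adjacent_mul_nonpos_of_le g j₁ h01 h
  rw [Fin.le_def, Fin.val_castSucc] at he₀
  rw [Fin.le_def, Fin.val_succ] at he₁
  exact ⟨e, by omega, by omega, he⟩

theorem AffineBasis.exists_mem_segment_mem_convexHull_image_compl {ι E : Type*} [Fintype ι]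
    [AddCommGroup E] [Module ℝ E] (b : AffineBasis ι ℝ E) {p q : E}
    (hp : p ∉ convexHull ℝ (range b)) (hq : q ∈ convexHull ℝ (range b)) :
    ∃ j, ∃ w ∈ segment ℝ p q, w ∈ convexHull ℝ (b '' {j}ᶜ) := by
  classical
  rw [b.convexHull_eq_nonneg_coord] at hp hq
  simp only [mem_ofPred_eq, not_forall, not_le] at hp hq
  obtain ⟨j₀, hj₀⟩ := hp
  set u := fun i => b.coord i q
  set v := fun i => b.coord i p
  -- walking from `q` to `p`, the first barycentric coordinate to vanish is the `j`-th
  obtain ⟨j, hj, hmin⟩ := (Finset.univ.filter fun i => v i < 0).exists_min_image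
    (fun i => u i / (u i - v i)) ⟨j₀, by simpa using hj₀⟩
  simp only [Finset.mem_filter, Finset.mem_univ, true_and] at hj hmin
  set τ := u j / (u j - v j)
  have hτ₀ : 0 ≤ τ := div_nonneg (hq j) (by linarith [hq j])
  have hτ₁ : τ < 1 := (div_lt_one (by linarith [hq j])).mpr (by linarith)
  set w := AffineMap.lineMap q p τ
  have hw : ∀ i, b.coord i w = u i + τ * (v i - u i) := fun i => by
    rw [(b.coord i).apply_lineMap, AffineMap.lineMap_apply_ring']; ring
  have hw₀ : ∀ i, 0 ≤ b.coord i w := fun i => by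
    rw [hw]
    by_cases hi : v i < 0
    · have hdi : 0 < u i - v i := by linarith [hq i]
      have := (le_div_iff₀ hdi).mp (hmin i hi)
      nlinarith
    · nlinarith [hq i]
  have hwj : b.coord j w = 0 := by
    have : τ * (u j - v j) = u j := div_mul_cancel₀ _ (by linarith [hq j])
    rw [hw]
    linarith
  refine ⟨j, w, ?_, ?_⟩
  · rw [segment_symm, segment_eq_image_lineMap]
    exact ⟨τ, ⟨hτ₀, hτ₁.le⟩, rfl⟩
  · rw [← b.linear_combination_coord_eq_self w,
      ← Finset.sum_erase (f := fun i => b.coord i w • b i) (a := j) _ (by simp [hwj])]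
    refine (convex_convexHull ℝ _).sum_mem (fun i _ => hw₀ i) ?_ fun i hi =>
      subset_convexHull ℝ _ ⟨i, Finset.ne_of_mem_erase hi, rfl⟩
    rw [Finset.sum_erase (f := fun i => b.coord i w) _ hwj, b.sum_coord_apply_eq_one]

def crossAffine (a c : ℝ × ℝ) : ℝ × ℝ →ᵃ[ℝ] ℝ where
  toFun := cross a c
  linear := (c.1 - a.1) • LinearMap.snd ℝ ℝ ℝ - (c.2 - a.2) • LinearMap.fst ℝ ℝ ℝ
  map_vadd' p v := by simp [cross]; ring

@[simp] lemma coe_crossAffine (a c : ℝ × ℝ) : ⇑(crossAffine a c) = cross a c := rfl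

lemma cross_eq_zero_of_mem_segment {a c w : ℝ × ℝ} (hw : w ∈ segment ℝ a c) :
    cross a c w = 0 := by
  have : crossAffine a c w ∈ crossAffine a c '' segment ℝ a c := mem_image_of_mem _ hw
  rw [image_segment] at this
  simpa [cross, mul_comm] using this

lemma cross_mul_nonpos_iff {a c x y : ℝ × ℝ} :
    cross a c x * cross a c y ≤ 0 ↔ ∃ z ∈ segment ℝ x y, cross a c z = 0 := by
  rw [← zero_mem_segment_iff_mul_nonpos, ← coe_crossAffine, ← image_segment]
  rfl

lemma collinear_of_cross_eq_zero {a c p : ℝ × ℝ} (h : cross a c p = 0) :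
    Collinear ℝ ({a, c, p} : Set (ℝ × ℝ)) := by
  rcases eq_or_ne a c with rfl | hac
  · simpa using collinear_pair ℝ a p
  have hp : p ∈ line[ℝ, a, c] := by
    obtain ⟨s, rfl⟩ : ∃ s : ℝ, AffineMap.lineMap a c s = p := by
      unfold cross at h
      rcases ne_or_eq a.1 c.1 with h1 | h1
      · refine ⟨(p.1 - a.1) / (c.1 - a.1), Prod.ext ?_ ?_⟩ <;>
          simp [AffineMap.lineMap_apply_module] <;> field_simp [sub_ne_zero.mpr h1.symm]
        · ring
        · linear_combination -h
      · have h2 : a.2 ≠ c.2 := fun h2 => hac (Prod.ext h1 h2)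
        refine ⟨(p.2 - a.2) / (c.2 - a.2), Prod.ext ?_ ?_⟩ <;>
          simp [AffineMap.lineMap_apply_module] <;> field_simp [sub_ne_zero.mpr h2.symm]
        · linear_combination h
        · ring
    exact AffineMap.lineMap_mem_affineSpan_pair s a c
  have := collinear_insert_of_mem_affineSpan_pair hp
  rwa [insert_comm, pair_comm] at this

namespace ConvexPos

variable {S : Set (ℝ × ℝ)}

lemma notMem_convexHull (hS : ConvexPos S) {p : ℝ × ℝ} (hp : p ∈ S) {t : Set (ℝ × ℝ)}
    (ht : t ⊆ S) (hpt : p ∉ t) : p ∉ convexHull ℝ t := fun h =>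
  convexIndependent_set_iff_notMem_convexHull_sdiff.mp hS p hp
    (convexHull_mono (fun x hx => mem_sdiff_singleton.mpr ⟨ht hx, by rintro rfl; exact hpt hx⟩) h)

lemma notMem_segment (hS : ConvexPos S) {x y z : ℝ × ℝ} (hx : x ∈ S) (hy : y ∈ S)
    (hz : z ∈ S) (hyx : y ≠ x) (hyz : y ≠ z) : y ∉ segment ℝ x z := by
  rw [← convexHull_pair]
  exact hS.notMem_convexHull hy (pair_subset hx hz) (by simp [hyx, hyz])

lemma notMem_segment_of_mem_segment (hS : ConvexPos S) {p u x y z : ℝ × ℝ} (hp : p ∈ S)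
    (hu : u ∈ S) (hx : x ∈ S) (hy : y ∈ S) (hpu : p ≠ u) (hpx : p ≠ x) (hpy : p ≠ y)
    (hz : z ∈ segment ℝ x y) : p ∉ segment ℝ u z := fun hpz =>
  hS.notMem_convexHull hp (insert_subset hu (pair_subset hx hy)) (by simp [hpu, hpx, hpy])
    ((convex_convexHull ℝ _).segment_subset (subset_convexHull ℝ _ (mem_insert u _))
      (segment_subset_convexHull (by simp) (by simp) hz) hpz)

lemma noThreeCollinear (hS : ConvexPos S) : NoThreeCollinear S := by
  intro p hp q hq r hr hpq hpr hqr hcol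
  rcases hcol.wbtw_or_wbtw_or_wbtw with h | h | h <;> rw [← mem_segment_iff_wbtw] at h
  exacts [hS.notMem_segment hp hq hr hpq.symm hqr h, hS.notMem_segment hq hr hp hqr.symm hpr.symm h,
    hS.notMem_segment hr hp hq hpr hpq h]

lemma cross_ne_zero (hS : ConvexPos S) {a c p : ℝ × ℝ} (ha : a ∈ S) (hc : c ∈ S) (hp : p ∈ S)
    (hac : a ≠ c) (hpa : p ≠ a) (hpc : p ≠ c) : cross a c p ≠ 0 := fun h =>
  hS.noThreeCollinear a ha c hc p hp hac hpa.symm hpc.symm (collinear_of_cross_eq_zero h)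

lemma segment_inter_nonempty_iff (hS : ConvexPos S) {a c b d : ℝ × ℝ} (ha : a ∈ S)
    (hc : c ∈ S) (hb : b ∈ S) (hd : d ∈ S) (hac : a ≠ c) (hba : b ≠ a) (hbc : b ≠ c)
    (hda : d ≠ a) (hdc : d ≠ c) :
    (segment ℝ a c ∩ segment ℝ b d).Nonempty ↔ cross a c b * cross a c d < 0 := by
  constructor
  · rintro ⟨w, hwac, hwbd⟩
    exact (cross_mul_nonpos_iff.mpr ⟨w, hwbd, cross_eq_zero_of_mem_segment hwac⟩).lt_of_ne
      (mul_ne_zero (hS.cross_ne_zero ha hc hb hac hba hbc) (hS.cross_ne_zero ha hc hd hac hda hdc))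
  · intro h
    obtain ⟨z, hzbd, hz⟩ := cross_mul_nonpos_iff.mp h.le
    rcases (collinear_of_cross_eq_zero hz).wbtw_or_wbtw_or_wbtw with h' | h' | h'
    · exact absurd (mem_segment_iff_wbtw.mpr h')
        (hS.notMem_segment_of_mem_segment hc ha hb hd hac.symm hbc.symm hdc.symm hzbd)
    · exact ⟨z, segment_symm ℝ c a ▸ mem_segment_iff_wbtw.mpr h', hzbd⟩
    · exact absurd (mem_segment_iff_wbtw.mpr h'.symm)
        (hS.notMem_segment_of_mem_segment ha hc hb hd hac hba.symm hda.symm hzbd)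

lemma exists_chord_meets_segment (hS : ConvexPos S) {T : Set (ℝ × ℝ)} (hT : T ⊆ S)
    {p z : ℝ × ℝ} (hp : p ∈ S) (hpT : p ∉ T) (hz : z ∈ convexHull ℝ T) (hzT : z ∉ T) :
    ∃ a ∈ T, ∃ c ∈ T, a ≠ c ∧ (segment ℝ a c ∩ segment ℝ p z).Nonempty := by
  rw [convexHull_eq_union] at hz
  simp only [mem_iUnion] at hz
  obtain ⟨t, htT, hti, hzt⟩ := hz
  suffices ∃ a ∈ t, ∃ c ∈ t, a ≠ c ∧ (segment ℝ a c ∩ segment ℝ p z).Nonempty by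
    obtain ⟨a, ha, c, hc, h⟩ := this
    exact ⟨a, htT ha, c, htT hc, h⟩
  have hcard : t.card ≤ 3 := by
    have := hti.card_le_finrank_succ
    have := Submodule.finrank_le (vectorSpan ℝ (range ((↑) : t → ℝ × ℝ)))
    simp only [Fintype.card_coe, Module.finrank_prod, Module.finrank_self] at *
    omega
  interval_cases hc : t.card
  · simp_all
  · obtain ⟨x, rfl⟩ := Finset.card_eq_one.mp hc
    simp only [Finset.coe_singleton, convexHull_singleton, mem_singleton_iff] at hzt
    exact absurd (htT (by simp [hzt])) hzT
  · obtain ⟨a, c, hac, rfl⟩ := Finset.card_eq_two.mp hc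
    rw [Finset.coe_pair, convexHull_pair] at hzt
    exact ⟨a, by simp, c, by simp, hac, z, hzt, right_mem_segment ℝ p z⟩
  · let b : AffineBasis t ℝ (ℝ × ℝ) := ⟨(↑), hti,
      hti.affineSpan_eq_top_iff_card_eq_finrank_add_one.mpr (by simp [hc])⟩
    have hb : range b = ↑t := Subtype.range_coe
    obtain ⟨j, w, hwpz, hw⟩ := b.exists_mem_segment_mem_convexHull_image_compl (p := p) (q := z)
      (hb ▸ hS.notMem_convexHull hp (htT.trans hT) (fun h => hpT (htT h))) (hb ▸ hzt)
    obtain ⟨a, c, hac, hface⟩ := Finset.card_eq_two.mp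
      (by rw [Finset.card_erase_of_mem j.2, hc] : (t.erase j).card = 2)
    have hbj : b '' {j}ᶜ = {a, c} := by
      rw [← Finset.coe_pair, ← hface, Finset.coe_erase,
        image_compl_eq_range_sdiff_image b.ind.injective, hb, image_singleton]
      rfl
    rw [hbj, convexHull_pair] at hw
    exact ⟨a, Finset.mem_of_mem_erase (hface ▸ Finset.mem_insert_self a {c}), c,
      Finset.mem_of_mem_erase (hface ▸ Finset.mem_insert_of_mem (Finset.mem_singleton_self c)),
      hac, w, hw, hwpz⟩

lemma exists_crossing_chords (hS : ConvexPos S) {A B : Set (ℝ × ℝ)} (hA : A ⊆ S) (hB : B ⊆ S)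
    (hAB : Disjoint A B) (h : ¬Disjoint (convexHull ℝ A) (convexHull ℝ B)) :
    ∃ a ∈ A, ∃ c ∈ A, ∃ b ∈ B, ∃ d ∈ B, a ≠ c ∧ (segment ℝ a c ∩ segment ℝ b d).Nonempty := by
  obtain ⟨z, hzA, hzB⟩ := not_disjoint_iff.mp h
  obtain ⟨p, hp⟩ : B.Nonempty := convexHull_nonempty_iff.mp ⟨z, hzB⟩
  have hzA' : z ∉ A := fun hz => hS.notMem_convexHull (hA hz) hB (hAB.notMem_of_mem_left hz) hzB
  obtain ⟨a, ha, c, hc, hac, w, hwac, hwpz⟩ :=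
    hS.exists_chord_meets_segment hA (hB hp) (hAB.notMem_of_mem_right hp) hzA hzA'
  have hwA : w ∈ convexHull ℝ A := segment_subset_convexHull ha hc hwac
  have hwB : w ∈ convexHull ℝ B :=
    (convex_convexHull ℝ B).segment_subset (subset_convexHull ℝ B hp) hzB hwpz
  have hwB' : w ∉ B := fun hw => hS.notMem_convexHull (hB hw) hA (hAB.notMem_of_mem_right hw) hwA
  obtain ⟨b, hb, d, hd, -, w', hw'bd, hw'aw⟩ :=
    hS.exists_chord_meets_segment hB (hA ha) (hAB.notMem_of_mem_left ha) hwB hwB'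
  exact ⟨a, ha, c, hc, b, hb, d, hd, hac, w',
    (convex_segment a c).segment_subset (left_mem_segment ℝ a c) hwac hw'aw, hw'bd⟩

lemma exists_edge_meets_segment (hS : ConvexPos S) {m : ℕ} {E : Fin (m + 1) → ℝ × ℝ}
    (hES : ∀ j, E j ∈ S) {a c : ℝ × ℝ} (ha : a ∈ S) (hc : c ∈ S) (hac : a ≠ c) {L U : ℕ}
    (hoff : ∀ j : Fin (m + 1), L ≤ j → (j : ℕ) < U → E j ≠ a ∧ E j ≠ c)
    {j₀ j₁ : Fin (m + 1)} (h₀ : L ≤ j₀ ∧ (j₀ : ℕ) < U) (h₁ : L ≤ j₁ ∧ (j₁ : ℕ) < U)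
    (h : cross a c (E j₀) * cross a c (E j₁) < 0) :
    ∃ e : Fin m, L ≤ (e : ℕ) ∧ (e : ℕ) + 1 < U ∧
      (segment ℝ a c ∩ segment ℝ (E e.castSucc) (E e.succ)).Nonempty := by
  obtain ⟨e, hL, hU, he⟩ := exists_adjacent_mul_nonpos (fun j => cross a c (E j)) h₀ h₁ h
  obtain ⟨hxa, hxc⟩ := hoff e.castSucc hL (by simp only [Fin.val_castSucc]; omega)
  obtain ⟨hya, hyc⟩ := hoff e.succ (by simp only [Fin.val_succ]; omega) hU
  refine ⟨e, hL, hU, (hS.segment_inter_nonempty_iff ha hc (hES _) (hES _) hac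
    hxa hxc hya hyc).mpr (he.lt_of_ne ?_)⟩
  exact mul_ne_zero (hS.cross_ne_zero ha hc (hES _) hac hxa hxc)
    (hS.cross_ne_zero ha hc (hES _) hac hya hyc)

end ConvexPos

lemma consecutive_range_image {ι : Type*} [Finite ι] {E : ι → ℝ × ℝ}
    (hinj : Function.Injective E) {P : Set ι}
    (h : Disjoint (convexHull ℝ (E '' P)) (convexHull ℝ (E '' Pᶜ))) :
    Consecutive (range E) (E '' P) := by
  rw [image_compl_eq_range_sdiff_image hinj] at h
  obtain ⟨f, u, v, hu, huv, hv⟩ := geometric_hahn_banach_compact_closed (convex_convexHull ℝ _)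
    ((toFinite _).isCompact_convexHull ℝ) (convex_convexHull ℝ _)
    ((toFinite _).isClosed_convexHull ℝ) h
  refine ⟨image_subset_range _ _, -(f : (ℝ × ℝ) →ₗ[ℝ] ℝ), -u, fun p hp => ?_, fun p hp => ?_⟩
  · have := hu p (subset_convexHull ℝ _ hp)
    simp only [LinearMap.neg_apply, ContinuousLinearMap.coe_coe]
    linarith
  · have := hv p (subset_convexHull ℝ _ hp)
    simp only [LinearMap.neg_apply, ContinuousLinearMap.coe_coe]
    linarith

theorem PlanarDrawing.disjoint_convexHull_prefix_suffix {m : ℕ} {E : Fin (m + 1) → ℝ × ℝ}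
    (hplanar : PlanarDrawing E) (hconv : ConvexPos (range E)) (hinj : Function.Injective E)
    (k : ℕ) :
    Disjoint (convexHull ℝ (E '' {j | (j : ℕ) < k})) (convexHull ℝ (E '' {j | k ≤ (j : ℕ)})) := by
  have hne : ∀ i j : Fin (m + 1), (i : ℕ) < k → k ≤ (j : ℕ) → E i ≠ E j := fun i j hi hj h => by
    have := congrArg Fin.val (hinj h)
    omega
  have hES : ∀ j, E j ∈ range E := mem_range_self
  by_contra hmeet
  obtain ⟨_, ⟨ja, hja, rfl⟩, _, ⟨jc, hjc, rfl⟩, _, ⟨jb, hjb, rfl⟩, _, ⟨jd, hjd, rfl⟩, hac,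
      hcross⟩ :=
    hconv.exists_crossing_chords (image_subset_range _ _) (image_subset_range _ _)
      ((disjoint_image_iff hinj).mpr (disjoint_left.mpr fun j h₁ h₂ => by
        simp only [mem_ofPred_eq] at h₁ h₂; omega)) hmeet
  simp only [mem_ofPred_eq] at hja hjc hjb hjd
  obtain ⟨e, hke, -, hxy⟩ := hconv.exists_edge_meets_segment hES (hES ja) (hES jc) hac
    (fun j hj _ => ⟨(hne ja j hja hj).symm, (hne jc j hjc hj).symm⟩) ⟨hjb, jb.2⟩ ⟨hjd, jd.2⟩
    ((hconv.segment_inter_nonempty_iff (hES _) (hES _) (hES _) (hES _) hac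
      (hne ja jb hja hjb).symm (hne jc jb hjc hjb).symm
      (hne ja jd hja hjd).symm (hne jc jd hjc hjd).symm).mp hcross)
  have hx : k ≤ (e.castSucc : ℕ) := hke
  have hy : k ≤ (e.succ : ℕ) := by simp only [Fin.val_succ]; omega
  have hxy' : E e.castSucc ≠ E e.succ := hinj.ne Fin.castSucc_lt_succ.ne
  obtain ⟨e', -, he'k, hcross'⟩ := hconv.exists_edge_meets_segment hES (hES _) (hES _) hxy'
    (L := 0) (U := k) (fun j _ hj => ⟨hne j _ hj hx, hne j _ hj hy⟩)
    ⟨Nat.zero_le _, hja⟩ ⟨Nat.zero_le _, hjc⟩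
    ((hconv.segment_inter_nonempty_iff (hES _) (hES _) (hES _) (hES _) hxy'
      (hne ja _ hja hx) (hne ja _ hja hy) (hne jc _ hjc hx) (hne jc _ hjc hy)).mp
      (by rwa [inter_comm]))
  exact hcross'.ne_empty (by rw [inter_comm]; exact hplanar.1 e' e (by omega))

theorem planar_prefix_suffix_consecutive_general {m : ℕ} (E : Fin (m + 1) → ℝ × ℝ)
    (S : Set (ℝ × ℝ)) (hconv : ConvexPos S)
    (hE : EmbOn E S) (hplanar : PlanarDrawing E) :
    ∀ i : ℕ, 1 < i → i < m + 1 →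
      Consecutive S (E '' {j : Fin (m + 1) | (j : ℕ) < i - 1}) ∧
      Consecutive S (E '' {j : Fin (m + 1) | i ≤ (j : ℕ)}) := by
  obtain ⟨hinj, rfl⟩ := hE
  intro i _ _
  constructor
  · apply consecutive_range_image hinj
    simpa only [compl_ofPred, not_lt] using
      hplanar.disjoint_convexHull_prefix_suffix hconv hinj (i - 1)
  · apply consecutive_range_image hinj
    simpa only [compl_ofPred, not_le] using
      (hplanar.disjoint_convexHull_prefix_suffix hconv hinj i).symm

/-- in a planar embedding of a path on a convex point set, for every
vertex `v_i` (1 < i < n), the images of `v_1,…,v_{i-1}` and of `v_{i+1},…,v_n` are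
consecutive subsets of `S`. -/
theorem planar_prefix_suffix_consecutive {m : ℕ} (E : Fin (m + 1) → ℝ × ℝ)
    (S : Set (ℝ × ℝ)) (hconv : ConvexPos S) (hgen : GenPos S)
    (hE : EmbOn E S) (hplanar : PlanarDrawing E) :
    ∀ i : ℕ, 1 < i → i < m + 1 →
      Consecutive S (E '' {j : Fin (m + 1) | (j : ℕ) < i - 1}) ∧
      Consecutive S (E '' {j : Fin (m + 1) | i ≤ (j : ℕ)}) :=
  planar_prefix_suffix_consecutive_general E S hconv hE hplanar
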